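/- arXiv:2206.08336 — 5 statements merged into one kernel-verified Lean document; each statement's English description precedes it below -/
import Mathlib

section
/- Let E be a finite set and U : ℝ≥0 → ℝ≥0 be monotonically increasing and concave with U(0) = 0. Let M be a finite set with weights w : M → ℝ≥0, and for each p ∈ E, m ∈ M let X_{p,m} be a {0,1}-valued random variable on a common probability space. Then the function F(S) = Σ_{m ∈ M} w(m) · 𝔼[U(Σ_{p ∈ S} X_{p,m})] on subsets S ⊆ E is monotonically increasing and submodular. -/
lemma conc_diff (U : ℝ → ℝ)
    (hUconc : ∀ x y t : ℝ, 0 ≤ x → 0 ≤ y → 0 ≤ t → t ≤ 1 →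
      t * U x + (1 - t) * U y ≤ U (t * x + (1 - t) * y)) :
    ∀ x y d : ℝ, 0 ≤ x → x ≤ y → 0 ≤ d →
      U (y + d) - U y ≤ U (x + d) - U x := by
  intro x y d hx hxy hd
  rcases eq_or_lt_of_le hd with h | h
  · rw [← h]; simp
  · have hpos : 0 < y + d - x := by linarith
    have ht0 : 0 ≤ d / (y + d - x) := div_nonneg hd hpos.le
    have ht1 : d / (y + d - x) ≤ 1 := by rw [div_le_one hpos]; linarith
    have e1 : d / (y + d - x) * x + (1 - d / (y + d - x)) * (y + d) = y := by
      field_simp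
      ring
    have e2 : d / (y + d - x) * (y + d) + (1 - d / (y + d - x)) * x = x + d := by
      field_simp
      ring
    have h1 := hUconc x (y + d) (d / (y + d - x)) hx (by linarith) ht0 ht1
    have h2 := hUconc (y + d) x (d / (y + d - x)) (by linarith) hx ht0 ht1
    rw [e1] at h1
    rw [e2] at h2
    linarith

/-- The expected-utility vaccine objective is monotone and submodular. -/
theorem stmt_0 {E M Ω : Type} [DecidableEq E] [Fintype Ω]
    (EE : Finset E) (MM : Finset M)
    (pr : Ω → ℝ) (hpr : ∀ ω, 0 ≤ pr ω) (hsum : ∑ ω, pr ω = 1)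
    (w : M → ℝ) (hw : ∀ m, 0 ≤ w m)
    (U : ℝ → ℝ) (hU0 : U 0 = 0) (hUnn : ∀ x, 0 ≤ x → 0 ≤ U x)
    (hUmono : ∀ x y : ℝ, 0 ≤ x → x ≤ y → U x ≤ U y)
    (hUconc : ∀ x y t : ℝ, 0 ≤ x → 0 ≤ y → 0 ≤ t → t ≤ 1 →
      t * U x + (1 - t) * U y ≤ U (t * x + (1 - t) * y))
    (X : E → M → Ω → ℝ) (hX : ∀ p m ω, X p m ω = 0 ∨ X p m ω = 1)
    (F : Finset E → ℝ)
    (hF : ∀ S : Finset E,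
      F S = ∑ m ∈ MM, w m * ∑ ω, pr ω * U (∑ p ∈ S, X p m ω)) :
    (∀ S T : Finset E, S ⊆ T → T ⊆ EE → F S ≤ F T) ∧
    (∀ S T : Finset E, S ⊆ T → T ⊆ EE → ∀ e ∈ EE,
      F (insert e T) - F T ≤ F (insert e S) - F S) := by
  have hXnn : ∀ p m ω, 0 ≤ X p m ω := by
    intro p m ω; rcases hX p m ω with h | h <;> rw [h] <;> norm_num
  have hSnn : ∀ (S : Finset E) m ω, 0 ≤ ∑ p ∈ S, X p m ω :=
    fun S m ω => Finset.sum_nonneg fun p _ => hXnn p m ω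
  have hSmono : ∀ (S T : Finset E) m ω, S ⊆ T →
      (∑ p ∈ S, X p m ω) ≤ ∑ p ∈ T, X p m ω :=
    fun S T m ω hST =>
      Finset.sum_le_sum_of_subset_of_nonneg hST fun p _ _ => hXnn p m ω
  have hmono : ∀ S T : Finset E, S ⊆ T → F S ≤ F T := by
    intro S T hST
    rw [hF, hF]
    refine Finset.sum_le_sum fun m _ => mul_le_mul_of_nonneg_left ?_ (hw m)
    refine Finset.sum_le_sum fun ω _ => mul_le_mul_of_nonneg_left ?_ (hpr ω)
    exact hUmono _ _ (hSnn S m ω) (hSmono S T m ω hST)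
  refine ⟨fun S T hST _ => hmono S T hST, fun S T hST _ e _ => ?_⟩
  by_cases heT : e ∈ T
  · rw [Finset.insert_eq_self.mpr heT]
    have := hmono S (insert e S) (Finset.subset_insert e S)
    linarith
  · have heS : e ∉ S := fun h => heT (hST h)
    rw [hF (insert e T), hF T, hF (insert e S), hF S,
      ← Finset.sum_sub_distrib, ← Finset.sum_sub_distrib]
    refine Finset.sum_le_sum fun m _ => ?_
    rw [← mul_sub, ← mul_sub]
    refine mul_le_mul_of_nonneg_left ?_ (hw m)
    rw [← Finset.sum_sub_distrib, ← Finset.sum_sub_distrib]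
    refine Finset.sum_le_sum fun ω _ => ?_
    rw [← mul_sub, ← mul_sub]
    refine mul_le_mul_of_nonneg_left ?_ (hpr ω)
    rw [Finset.sum_insert heT, Finset.sum_insert heS]
    have := conc_diff U hUconc (∑ p ∈ S, X p m ω) (∑ p ∈ T, X p m ω)
      (X e m ω) (hSnn S m ω) (hSmono S T m ω hST) (hXnn e m ω)
    simpa [add_comm] using this
end

section
/- Let F : 2^E → ℝ≥0 be a monotone submodular function with F(∅) = 0 on a finite ground set E, and let G = (E, 𝒢) be a graph on E encoding pairwise conflict constraints in which every vertex has degree at most Δ with Δ ≥ 1. Let Ŝ be the output of the greedy algorithm that repeatedly adds the feasible element with the largest marginal gain and removes it and all its neighbors from consideration, stopping after k additions or when no candidates remain. Let S* be any independent set in G of size at most k maximizing F. Then F(Ŝ) ≥ F(S*) / (1 + Δ). -/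
/-!
A charging argument, by induction on the number `k` of remaining greedy steps, against any set `T`
of at most `k` candidates. A greedy step picking `x` with gain `g = F (insert x S) - F S` removes
from the pool only `x` and at most `Δ` neighbours of `x`. By submodularity and the greedy choice,
each removed element of `T` other than `x` adds at most `g` on top of `insert x S`, so together
they cost at most `Δ g`, and the rest of `T` is handled by induction from `insert x S`. If no
element of `T` is removed but `T` has `k + 1` elements, one element is dropped instead, paid for
by `Δ ≥ 1`.
-/

open Classical in
/-- The greedy procedure: at each step add the candidate maximizing `F (insert x S)`,
then remove it and all its `G`-neighbors from the candidate pool. -/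
noncomputable def greedy {E : Type} [DecidableEq E] (F : Finset E → ℝ) (G : SimpleGraph E) :
    ℕ → Finset E → Finset E → Finset E
  | 0, _, S => S
  | (k + 1), Q, S =>
    if h : Q.Nonempty then
      let x := Classical.choose (Q.exists_max_image (fun y => F (insert y S)) h)
      greedy F G k ((Q \ Q.filter (fun y => G.Adj x y)).erase x) (insert x S)
    else S

open Finset

variable {E : Type} [DecidableEq E]

def IsSubmodular (F : Finset E → ℝ) : Prop :=
  ∀ ⦃S T : Finset E⦄, S ⊆ T → ∀ e, F (insert e T) - F T ≤ F (insert e S) - F S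

theorem IsSubmodular.sub_le_sum_marginal {F : Finset E → ℝ} (hF : IsSubmodular F)
    {S B : Finset E} (hSB : S ⊆ B) (D : Finset E) :
    F (B ∪ D) - F B ≤ ∑ d ∈ D, (F (insert d S) - F S) := by
  induction D using Finset.induction_on with
  | empty => simp
  | insert a D ha ih =>
    rw [sum_insert ha, union_insert]
    have := hF (hSB.trans (subset_union_left (s₂ := D))) a
    linarith

theorem greedy_empty (F : Finset E → ℝ) (G : SimpleGraph E) :
    ∀ (k : ℕ) (S : Finset E), greedy F G k ∅ S = S
  | 0, _ => rfl
  | _ + 1, _ => by simp [greedy]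

open Classical in
theorem exists_greedy_succ (F : Finset E → ℝ) (G : SimpleGraph E) (k : ℕ) {Q : Finset E}
    (hQ : Q.Nonempty) (S : Finset E) :
    ∃ x, (∀ y ∈ Q, F (insert y S) ≤ F (insert x S)) ∧
      ∃ Q', (∀ y ∈ Q, y ∉ Q' → y = x ∨ G.Adj x y) ∧
        greedy F G (k + 1) Q S = greedy F G k Q' (insert x S) := by
  obtain ⟨-, hmax⟩ := Classical.choose_spec (Q.exists_max_image (fun y => F (insert y S)) hQ)
  refine ⟨_, hmax, _, fun y hyQ hy => ?_, by rw [greedy, dif_pos hQ]⟩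
  simp only [mem_erase, mem_sdiff, mem_filter, not_and] at hy
  tauto

theorem exists_small_discard {T Q : Finset E} {x : E} {Δ k : ℕ} (hΔ : 1 ≤ Δ) (hT : T.card ≤ k + 1)
    (hout : ((T \ Q).erase x).card ≤ Δ) :
    ∃ D ⊆ T, (D.erase x).card ≤ Δ ∧ T \ D ⊆ Q ∧ (T \ D).card ≤ k := by
  have hrest : T \ (T \ Q) ⊆ Q := by
    rw [sdiff_sdiff_right_self]
    exact inter_subset_right
  by_cases hsmall : T.card ≤ k ∨ (T \ Q).Nonempty
  · refine ⟨T \ Q, sdiff_subset, hout, hrest, ?_⟩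
    rw [card_sdiff_of_subset sdiff_subset]
    rcases hsmall with h | h
    · omega
    · have := h.card_pos
      omega
  · rw [not_or, not_le, not_nonempty_iff_eq_empty] at hsmall
    obtain ⟨y, hy⟩ : T.Nonempty := card_pos.1 (by omega)
    refine ⟨{y}, singleton_subset_iff.2 hy, ?_, ?_, ?_⟩
    · exact (card_le_card (erase_subset x _)).trans (by simpa using hΔ)
    · exact sdiff_subset.trans (sdiff_eq_empty_iff_subset.1 hsmall.2)
    · rw [card_sdiff_of_subset (singleton_subset_iff.2 hy), card_singleton]
      omega

theorem sub_le_of_greedy_choice {F : Finset E → ℝ} (hmono : Monotone F) (hsub : IsSubmodular F)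
    {S T D : Finset E} {x : E} {Δ : ℕ} (hmax : ∀ y ∈ T, F (insert y S) ≤ F (insert x S))
    (hDT : D ⊆ T) (hD : (D.erase x).card ≤ Δ) :
    F (S ∪ T) - F S ≤
      (1 + Δ) * (F (insert x S) - F S) + (F (insert x S ∪ (T \ D)) - F (insert x S)) := by
  have hgain : 0 ≤ F (insert x S) - F S := sub_nonneg.2 (hmono (subset_insert x S))
  have hsplit : insert x S ∪ T = insert x S ∪ (T \ D) ∪ D.erase x := by
    ext a
    have := @hDT a
    simp only [mem_union, mem_insert, mem_sdiff, mem_erase]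
    tauto
  have hgrow : F (S ∪ T) ≤ F (insert x S ∪ T) :=
    hmono (union_subset_union (subset_insert x S) subset_rfl)
  have hremoved : F (insert x S ∪ T) - F (insert x S ∪ (T \ D)) ≤ Δ * (F (insert x S) - F S) :=
    calc F (insert x S ∪ T) - F (insert x S ∪ (T \ D))
        ≤ ∑ d ∈ D.erase x, (F (insert d S) - F S) := by
          rw [hsplit]
          exact hsub.sub_le_sum_marginal ((subset_insert x S).trans subset_union_left) _
      _ ≤ (D.erase x).card * (F (insert x S) - F S) := by
          rw [← nsmul_eq_mul]
          exact sum_le_card_nsmul _ _ _ fun d hd =>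
            sub_le_sub_right (hmax d (hDT (mem_of_mem_erase hd))) _
      _ ≤ Δ * (F (insert x S) - F S) := by gcongr
  linarith

theorem sub_le_mul_greedy [Fintype E] {F : Finset E → ℝ} (hmono : Monotone F)
    (hsub : IsSubmodular F) (G : SimpleGraph E) [DecidableRel G.Adj] {Δ : ℕ} (hΔ : 1 ≤ Δ)
    (hdeg : ∀ v, G.degree v ≤ Δ) (k : ℕ) {Q T : Finset E} (hTQ : T ⊆ Q) (hTk : T.card ≤ k)
    (S : Finset E) :
    F (S ∪ T) - F S ≤ (1 + Δ) * (F (greedy F G k Q S) - F S) := by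
  induction k generalizing Q S T with
  | zero => simp [card_eq_zero.1 (Nat.le_zero.1 hTk), greedy]
  | succ k ih =>
    rcases Q.eq_empty_or_nonempty with rfl | hQ
    · simp [subset_empty.1 hTQ, greedy_empty]
    obtain ⟨x, hmax, Q', hpool, hgreedy⟩ := exists_greedy_succ F G k hQ S
    rw [hgreedy]
    have hout : ((T \ Q').erase x).card ≤ Δ := by
      refine (card_le_card fun y hy => ?_).trans
        ((G.card_neighborFinset_eq_degree x).trans_le (hdeg x))
      obtain ⟨hyx, hyT, hyQ'⟩ : y ≠ x ∧ y ∈ T ∧ y ∉ Q' := by simpa using hy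
      exact (G.mem_neighborFinset x y).2 ((hpool y (hTQ hyT) hyQ').resolve_left hyx)
    obtain ⟨D, hDT, hD, hTDQ, hTDk⟩ := exists_small_discard hΔ hTk hout
    have hstep := sub_le_of_greedy_choice hmono hsub (fun y hy => hmax y (hTQ hy)) hDT hD
    have hrest := ih hTDQ hTDk (insert x S)
    linarith

theorem stmt_2_general {E : Type} [DecidableEq E] [Fintype E]
    (F : Finset E → ℝ) (hF0 : F ∅ = 0)
    (hFmono : ∀ S T : Finset E, S ⊆ T → F S ≤ F T)
    (hFsub : ∀ S T : Finset E, S ⊆ T → ∀ e : E,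
      F (insert e T) - F T ≤ F (insert e S) - F S)
    (G : SimpleGraph E) [DecidableRel G.Adj]
    (Δ : ℕ) (hΔ : 1 ≤ Δ) (hdeg : ∀ v : E, G.degree v ≤ Δ)
    (k : ℕ) (Sstar : Finset E)
    (hcard : Sstar.card ≤ k) :
    F Sstar ≤ (1 + (Δ : ℝ)) * F (greedy F G k Finset.univ ∅) := by
  have h := sub_le_mul_greedy (fun S T => hFmono S T) (fun S T h => hFsub S T h) G hΔ hdeg k
    (subset_univ Sstar) hcard ∅
  rwa [empty_union, hF0, sub_zero, sub_zero] at h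

/-- the greedy solution is a `(1 + Δ)`-approximation to the best independent
set of size at most `k` for a monotone submodular `F`, when `G` has max degree `≤ Δ`, `Δ ≥ 1`. -/
theorem stmt_2 {E : Type} [DecidableEq E] [Fintype E]
    (F : Finset E → ℝ) (hFnn : ∀ S, 0 ≤ F S) (hF0 : F ∅ = 0)
    (hFmono : ∀ S T : Finset E, S ⊆ T → F S ≤ F T)
    (hFsub : ∀ S T : Finset E, S ⊆ T → ∀ e : E,
      F (insert e T) - F T ≤ F (insert e S) - F S)
    (G : SimpleGraph E) [DecidableRel G.Adj]
    (Δ : ℕ) (hΔ : 1 ≤ Δ) (hdeg : ∀ v : E, G.degree v ≤ Δ)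
    (k : ℕ) (Sstar : Finset E)
    (hind : ∀ a ∈ Sstar, ∀ b ∈ Sstar, ¬ G.Adj a b)
    (hcard : Sstar.card ≤ k)
    (hopt : ∀ T : Finset E, (∀ a ∈ T, ∀ b ∈ T, ¬ G.Adj a b) → T.card ≤ k → F T ≤ F Sstar) :
    F Sstar ≤ (1 + (Δ : ℝ)) * F (greedy F G k Finset.univ ∅) :=
  stmt_2_general F hF0 hFmono hFsub G Δ hΔ hdeg k Sstar hcard
end

section
/- Let F : 2^E → ℝ≥0 be a monotone submodular function with F(∅) = 0 on a finite ground set E, and let G = (E, 𝒢) be a conflict graph. Let G² be the square of G (vertices joined if connected by a path of length ≤ 2 in G). Let Ŝ be the output of the greedy algorithm with conflict graph G and cardinality bound k, and let S*₂ be a maximizer of F over independent sets of G² of size at most k. Then F(Ŝ) ≥ F(S*₂) / 2. -/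
open Classical in
lemma greedy_succ {E : Type} [DecidableEq E] (F : Finset E → ℝ) (G : SimpleGraph E)
    (k : ℕ) (Q S : Finset E) (h : Q.Nonempty) :
    greedy F G (k+1) Q S =
      greedy F G k
        ((Q \ Q.filter (fun y => G.Adj (Classical.choose (Q.exists_max_image (fun y => F (insert y S)) h)) y)).erase
          (Classical.choose (Q.exists_max_image (fun y => F (insert y S)) h)))
        (insert (Classical.choose (Q.exists_max_image (fun y => F (insert y S)) h)) S) := by
  rw [greedy, dif_pos h]

lemma greedy_subset {E : Type} [DecidableEq E] (F : Finset E → ℝ) (G : SimpleGraph E) :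
    ∀ (k : ℕ) (Q S : Finset E), S ⊆ greedy F G k Q S
  | 0, Q, S => by rw [greedy]
  | (k+1), Q, S => by
    by_cases h : Q.Nonempty
    · rw [greedy_succ F G k Q S h]
      exact (Finset.subset_insert _ _).trans (greedy_subset F G k _ _)
    · rw [greedy, dif_neg h]

open Classical in
lemma greedy_main {E : Type} [DecidableEq E]
    (F : Finset E → ℝ)
    (hFmono : ∀ S T : Finset E, S ⊆ T → F S ≤ F T)
    (hFsub : ∀ S T : Finset E, S ⊆ T → ∀ e : E,
      F (insert e T) - F T ≤ F (insert e S) - F S)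
    (G : SimpleGraph E) :
    ∀ (k : ℕ) (Q S T : Finset E),
      T ⊆ Q →
      (∀ a ∈ T, ∀ b ∈ T, a ≠ b → ¬ G.Adj a b ∧ ¬ ∃ c : E, G.Adj a c ∧ G.Adj c b) →
      T.card ≤ k →
      F (S ∪ T) - F S ≤ 2 * (F (greedy F G k Q S) - F S)
  | 0, Q, S, T, hTQ, hind, hcard => by
    have : T = ∅ := Finset.card_eq_zero.mp (Nat.le_zero.mp hcard)
    subst this
    rw [greedy]
    simp
  | (k+1), Q, S, T, hTQ, hind, hcard => by
    have hge : F S ≤ F (greedy F G (k+1) Q S) :=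
      hFmono _ _ (greedy_subset F G (k+1) Q S)
    by_cases hT : T.Nonempty
    swap
    · rw [Finset.not_nonempty_iff_eq_empty] at hT
      subst hT
      simp only [Finset.union_empty]
      linarith
    have h : Q.Nonempty := hT.mono hTQ
    set x := Classical.choose (Q.exists_max_image (fun y => F (insert y S)) h) with hxdef
    obtain ⟨hxQ, hxmax⟩ := Classical.choose_spec (Q.exists_max_image (fun y => F (insert y S)) h)
    set Q' : Finset E := (Q \ Q.filter (fun y => G.Adj x y)).erase x with hQ'def
    have hQ'mem : ∀ b, b ∈ Q → b ∉ Q' → b = x ∨ G.Adj x b := by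
      intro b hbQ hb
      rw [hQ'def, Finset.mem_erase] at hb
      push_neg at hb
      by_cases hbx : b = x
      · exact Or.inl hbx
      · right
        have := hb hbx
        rw [Finset.mem_sdiff, Finset.mem_filter] at this
        push_neg at this
        exact (this hbQ).2
    -- at most one element of T fails to be in Q'
    have huniq : ∀ b ∈ T, ∀ c ∈ T, b ∉ Q' → c ∉ Q' → b = c := by
      intro b hb c hc hb' hc'
      by_contra hbc
      rcases hQ'mem b (hTQ hb) hb' with hbx | hab <;>
        rcases hQ'mem c (hTQ hc) hc' with hcx | hac
      · exact hbc (hbx.trans hcx.symm)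
      · exact (hind b hb c hc hbc).1 (by rw [hbx]; exact hac)
      · exact (hind b hb c hc hbc).1 (by rw [hcx]; exact hab.symm)
      · exact (hind b hb c hc hbc).2 ⟨x, hab.symm, hac⟩
    -- choose the charged element a
    have hExa : ∃ a ∈ T, ∀ b ∈ T, b ≠ a → b ∈ Q' := by
      by_cases hh : ∃ b ∈ T, b ∉ Q'
      · obtain ⟨a, ha, ha'⟩ := hh
        refine ⟨a, ha, ?_⟩
        intro b hb hba
        by_contra hb'
        exact hba (huniq b hb a ha hb' ha')
      · push_neg at hh
        exact ⟨hT.choose, hT.choose_spec, fun b hb _ => hh b hb⟩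
    obtain ⟨a, haT, haQ'⟩ := hExa
    set T' : Finset E := T.erase a with hT'def
    have hT'Q' : T' ⊆ Q' := fun b hb => by
      rw [hT'def, Finset.mem_erase] at hb
      exact haQ' b hb.2 hb.1
    have hT'card : T'.card ≤ k := by
      rw [hT'def]
      have := Finset.card_erase_of_mem haT
      omega
    have hT'ind : ∀ a ∈ T', ∀ b ∈ T', a ≠ b →
        ¬ G.Adj a b ∧ ¬ ∃ c : E, G.Adj a c ∧ G.Adj c b := fun p hp q hq hpq =>
      hind p (Finset.mem_of_mem_erase hp) q (Finset.mem_of_mem_erase hq) hpq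
    have IH := greedy_main F hFmono hFsub G k Q' (insert x S) T' hT'Q' hT'ind hT'card
    have hgr : greedy F G (k+1) Q S = greedy F G k Q' (insert x S) := by
      rw [greedy_succ F G k Q S h]
    set g := greedy F G k Q' (insert x S) with hgdef
    -- chain of inequalities
    have h1 : F (S ∪ T) ≤ F (insert a (insert x S ∪ T')) := by
      apply hFmono
      intro y hy
      rw [Finset.mem_union] at hy
      rcases hy with hy | hy
      · exact Finset.mem_insert_of_mem (Finset.mem_union_left _ (Finset.mem_insert_of_mem hy))
      · by_cases hya : y = a
        · exact hya ▸ Finset.mem_insert_self _ _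
        · exact Finset.mem_insert_of_mem (Finset.mem_union_right _
            (Finset.mem_erase.mpr ⟨hya, hy⟩))
    have h2 : F (insert a (insert x S ∪ T')) - F (insert x S ∪ T') ≤
        F (insert a S) - F S :=
      hFsub S _ (fun y hy => Finset.mem_union_left _ (Finset.mem_insert_of_mem hy)) a
    have h3 : F (insert a S) ≤ F (insert x S) := hxmax a (hTQ haT)
    have h4 : F (insert x S ∪ T') - F (insert x S) ≤ 2 * (F g - F (insert x S)) := IH
    rw [hgr]
    linarith

/-- the greedy solution is a 2-approximation to the best set of size at most `k`
that is independent in the square `G²` of the conflict graph. -/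
theorem stmt_3 {E : Type} [DecidableEq E] [Fintype E]
    (F : Finset E → ℝ) (hFnn : ∀ S, 0 ≤ F S) (hF0 : F ∅ = 0)
    (hFmono : ∀ S T : Finset E, S ⊆ T → F S ≤ F T)
    (hFsub : ∀ S T : Finset E, S ⊆ T → ∀ e : E,
      F (insert e T) - F T ≤ F (insert e S) - F S)
    (G : SimpleGraph E)
    (k : ℕ) (Sstar2 : Finset E)
    (hind2 : ∀ a ∈ Sstar2, ∀ b ∈ Sstar2, a ≠ b →
      ¬ G.Adj a b ∧ ¬ ∃ c : E, G.Adj a c ∧ G.Adj c b)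
    (hcard : Sstar2.card ≤ k)
    (hopt : ∀ T : Finset E,
      (∀ a ∈ T, ∀ b ∈ T, a ≠ b → ¬ G.Adj a b ∧ ¬ ∃ c : E, G.Adj a c ∧ G.Adj c b) →
      T.card ≤ k → F T ≤ F Sstar2) :
    F Sstar2 ≤ 2 * F (greedy F G k Finset.univ ∅) := by
  have := greedy_main F hFmono hFsub G k Finset.univ ∅ Sstar2
    (Finset.subset_univ _) hind2 hcard
  rw [Finset.empty_union, hF0] at this
  linarith
end

section
/- Let G be a graph with maximum degree Δ(G) ≥ 1, and construct the instance where each peptide is a vertex of G, each vertex v has an associated genotype m_v that displays only peptide v (with probability 1) and no other peptide, every genotype has weight 1, and U(x) = min(x,1). Then for any set S of vertices, the objective F_U(S) equals |S|; consequently the constrained optimum over independent sets of G of size at most k = |V| equals the maximum independent set size of G. -/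
open Classical in
/-- in the encoding where each vertex `v` has its own genotype displaying only
peptide `v`, with unit weights and `U(x) = min(x,1)`, the objective equals `|S|`, and hence
the constrained optimum over independent sets of size at most `|V|` is the maximum
independent set size of `G`. -/
theorem stmt_14 {V : Type} [Fintype V] [DecidableEq V]
    (G : SimpleGraph V) (Δ : ℕ) (hΔ : 1 ≤ Δ)
    (hdeg : ∀ v : V, (Finset.univ.filter (fun w => G.Adj v w)).card ≤ Δ)
    (hdegmax : ∃ v : V, (Finset.univ.filter (fun w => G.Adj v w)).card = Δ)
    (U : ℕ → ℝ) (hU : ∀ x : ℕ, U x = min (x : ℝ) 1)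
    (F : Finset V → ℝ)
    (hF : ∀ S : Finset V,
      F S = ∑ v : V, U (∑ p ∈ S, if p = v then 1 else 0))
    (N : ℕ)
    (hN : IsGreatest {n : ℕ | ∃ S : Finset V,
      (∀ a ∈ S, ∀ b ∈ S, ¬ G.Adj a b) ∧ S.card = n} N) :
    (∀ S : Finset V, F S = S.card) ∧
    IsGreatest {x : ℝ | ∃ S : Finset V,
      (∀ a ∈ S, ∀ b ∈ S, ¬ G.Adj a b) ∧ S.card ≤ Fintype.card V ∧ F S = x} (N : ℝ) := by
  have key : ∀ S : Finset V, F S = S.card := by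
    intro S
    rw [hF]
    have : ∀ v : V, U (∑ p ∈ S, if p = v then 1 else 0) = if v ∈ S then (1:ℝ) else 0 := by
      intro v
      have hsum : (∑ p ∈ S, if p = v then 1 else 0) = if v ∈ S then 1 else 0 := by
        rw [Finset.sum_ite_eq' S v (fun _ => 1)]
      rw [hsum, hU]
      by_cases h : v ∈ S <;> simp [h]
    simp only [this]
    rw [Finset.sum_ite_mem, Finset.univ_inter, Finset.sum_const, nsmul_eq_mul, mul_one]
  refine ⟨key, ?_, ?_⟩
  · obtain ⟨S, hind, hcard⟩ := hN.1
    exact ⟨S, hind, Finset.card_le_univ S, by rw [key, hcard]⟩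
  · rintro x ⟨S, hind, -, hFS⟩
    rw [key] at hFS
    subst hFS
    exact_mod_cast hN.2 ⟨S, hind, rfl⟩
end

section
/- Let F : 2^E → ℝ≥0 be monotone and submodular with F(∅) = 0, let e₁,…,e_a be the elements chosen by the greedy procedure in order, and let o₁,…,o_b be additional elements with b ≤ a such that there is an injective pairing σ assigning each o_j to a distinct e_{σ(j)} with the property that at the time e_{σ(j)} was chosen, o_j was still a candidate and thus the marginal gain of e_{σ(j)} was at least the marginal gain of o_j at that step. Then F({e₁,…,e_a} ∪ {o₁,…,o_b}) ≤ 2·F({e₁,…,e_a}). -/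
/-!
Charge the extra value of each `o j` to the greedy element `e (σ j)`: by diminishing returns the
gain of `o j` with respect to the whole greedy set is at most its gain at step `σ j`, which is at
most the gain of `e (σ j)` there. As `σ` is injective and gains are nonnegative, the total is at
most the sum of all greedy gains, and that sum telescopes to the greedy value.
-/

open Finset

section

variable {E : Type} [DecidableEq E]

/-- Submodularity of a set function on `Finset E`, in its diminishing-returns form. -/
def DiminishingReturns {G : Type*} [AddCommGroup G] [PartialOrder G] (F : Finset E → G) : Prop :=
  ∀ S T : Finset E, S ⊆ T → ∀ x : E, F (insert x T) - F T ≤ F (insert x S) - F S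

namespace DiminishingReturns

variable {G : Type*} [AddCommGroup G] [PartialOrder G] [IsOrderedAddMonoid G] {F : Finset E → G}

/-- Take `T = insert x S`, where the gain on the left vanishes. -/
theorem le_insert (hF : DiminishingReturns F) (S : Finset E) (x : E) :
    F S ≤ F (insert x S) := by
  have h := hF S (insert x S) (subset_insert x S) x
  rwa [insert_idem, sub_self, sub_nonneg] at h

theorem union_image_sub_le_sum {ι : Type*} (hF : DiminishingReturns F) (S : Finset E)
    (o : ι → E) (s : Finset ι) :
    F (S ∪ s.image o) - F S ≤ ∑ j ∈ s, (F (insert (o j) S) - F S) := by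
  classical
  induction s using Finset.induction_on with
  | empty => simp
  | insert j s hj ih =>
    rw [sum_insert hj, image_insert, union_insert]
    calc F (insert (o j) (S ∪ s.image o)) - F S
        = (F (insert (o j) (S ∪ s.image o)) - F (S ∪ s.image o)) +
            (F (S ∪ s.image o) - F S) := by abel
      _ ≤ (F (insert (o j) S) - F S) + ∑ j ∈ s, (F (insert (o j) S) - F S) :=
          add_le_add (hF S _ subset_union_left (o j)) ih

end DiminishingReturns

/-- The greedy set after `n` steps. -/
def prefixImage {a : ℕ} (e : Fin a → E) (n : ℕ) : Finset E :=
  (univ.filter fun t : Fin a => (t : ℕ) < n).image e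

section prefixImage

variable {a : ℕ} (e : Fin a → E)

theorem prefixImage_zero : prefixImage e 0 = ∅ := by
  simp [prefixImage]

theorem prefixImage_self : prefixImage e a = univ.image e := by
  simp [prefixImage]

theorem prefixImage_subset (n : ℕ) : prefixImage e n ⊆ univ.image e :=
  image_subset_image (filter_subset _ _)

theorem insert_prefixImage (i : Fin a) :
    insert (e i) (prefixImage e i) = prefixImage e (i + 1) := by
  rw [prefixImage, prefixImage, ← image_insert]
  congr 1
  ext t
  simp only [mem_insert, mem_filter, mem_univ, true_and, Fin.ext_iff]
  omega

theorem sum_insert_prefixImage_sub {G : Type*} [AddCommGroup G] (F : Finset E → G) :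
    ∑ i : Fin a, (F (insert (e i) (prefixImage e i)) - F (prefixImage e i)) =
      F (univ.image e) - F ∅ := by
  simp_rw [insert_prefixImage]
  rw [Fin.sum_univ_eq_sum_range (fun n => F (prefixImage e (n + 1)) - F (prefixImage e n)),
    sum_range_sub (fun n => F (prefixImage e n)), prefixImage_self, prefixImage_zero]

end prefixImage

end

theorem stmt_17_general {E : Type} [DecidableEq E]
    (F : Finset E → ℝ) (hF0 : F ∅ = 0)
    (hFsub : ∀ S T : Finset E, S ⊆ T → ∀ x : E,
      F (insert x T) - F T ≤ F (insert x S) - F S)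
    (a b : ℕ) (e : Fin a → E) (o : Fin b → E)
    (σ : Fin b → Fin a) (hσ : Function.Injective σ)
    (pre : Fin a → Finset E)
    (hpre : ∀ i : Fin a, pre i = (Finset.univ.filter (fun t : Fin a => (t : ℕ) < (i : ℕ))).image e)
    (hgain : ∀ j : Fin b,
      F (insert (o j) (pre (σ j))) - F (pre (σ j)) ≤
        F (insert (e (σ j)) (pre (σ j))) - F (pre (σ j))) :
    F (Finset.univ.image e ∪ Finset.univ.image o) ≤ 2 * F (Finset.univ.image e) := by
  have hF : DiminishingReturns F := hFsub
  have hpre_prefix : ∀ i, pre i = prefixImage e i := hpre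
  set G := univ.image e
  set gain : Fin a → ℝ := fun i => F (insert (e i) (pre i)) - F (pre i)
  have hgain_nonneg : ∀ i, 0 ≤ gain i := fun i => sub_nonneg.2 (hF.le_insert _ _)
  have hcharge : ∀ j, F (insert (o j) G) - F G ≤ gain (σ j) := fun j =>
    (hF _ _ (hpre_prefix (σ j) ▸ prefixImage_subset e _) (o j)).trans (hgain j)
  have : F (G ∪ univ.image o) - F G ≤ F G :=
    calc F (G ∪ univ.image o) - F G
        ≤ ∑ j, (F (insert (o j) G) - F G) := hF.union_image_sub_le_sum G o univ
      _ ≤ ∑ j, gain (σ j) := sum_le_sum fun j _ => hcharge j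
      _ = ∑ i ∈ univ.image σ, gain i := (sum_image fun _ _ _ _ h => hσ h).symm
      _ ≤ ∑ i, gain i := sum_le_univ_sum_of_nonneg hgain_nonneg
      _ = F G := by
        simp only [gain, hpre_prefix]
        rw [sum_insert_prefixImage_sub, hF0, sub_zero]
  linarith

/-- charging argument — if each extra element `o j` is injectively charged to a
greedy element whose marginal gain at its step dominates that of `o j`, then the combined set
has value at most twice the greedy value. -/
theorem stmt_17 {E : Type} [DecidableEq E]
    (F : Finset E → ℝ) (hFnn : ∀ S, 0 ≤ F S) (hF0 : F ∅ = 0)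
    (hFmono : ∀ S T : Finset E, S ⊆ T → F S ≤ F T)
    (hFsub : ∀ S T : Finset E, S ⊆ T → ∀ x : E,
      F (insert x T) - F T ≤ F (insert x S) - F S)
    (a b : ℕ) (e : Fin a → E) (o : Fin b → E)
    (hInjE : Function.Injective e)
    (σ : Fin b → Fin a) (hσ : Function.Injective σ)
    (pre : Fin a → Finset E)
    (hpre : ∀ i : Fin a, pre i = (Finset.univ.filter (fun t : Fin a => (t : ℕ) < (i : ℕ))).image e)
    (hcand : ∀ j : Fin b, o j ∉ pre (σ j))
    (hgain : ∀ j : Fin b,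
      F (insert (o j) (pre (σ j))) - F (pre (σ j)) ≤
        F (insert (e (σ j)) (pre (σ j))) - F (pre (σ j))) :
    F (Finset.univ.image e ∪ Finset.univ.image o) ≤ 2 * F (Finset.univ.image e) :=
  stmt_17_general F hF0 hFsub a b e o σ hσ pre hpre hgain
end
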